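/- arXiv:1807.02703 — 2 statements merged into one kernel-verified Lean document; each statement's English description precedes it below -/
import Mathlib

section
/- For any composite n > 4, the vertex connectivity, edge connectivity, and minimum degree of the zero divisor graph Γ[Z_n] are all equal: κ(Γ[Z_n]) = κ_e(Γ[Z_n]) = δ(Γ[Z_n]). -/
/-- The nonzero zero divisors of `ZMod n`. -/
def ZeroDivisors (n : ℕ) : Set (ZMod n) :=
  {x | x ≠ 0 ∧ ∃ y : ZMod n, y ≠ 0 ∧ x * y = 0}

/-- The zero divisor graph of `ZMod n`: vertices are nonzero zero divisors,
distinct vertices adjacent iff their product is zero. -/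
def zdGraph (n : ℕ) : SimpleGraph (ZeroDivisors n) where
  Adj u v := u ≠ v ∧ (u : ZMod n) * (v : ZMod n) = 0
  symm := ⟨fun u v h => ⟨h.1.symm, by rw [mul_comm]; exact h.2⟩⟩
  loopless := ⟨fun u h => h.1 rfl⟩

/-- Vertex connectivity: smallest number of vertices whose deletion leaves a
disconnected graph or a single vertex. -/
noncomputable def vConn {V : Type*} (G : SimpleGraph V) : ℕ :=
  sInf { k | ∃ S : Set V, S.Finite ∧ S.ncard = k ∧
    (¬ (G.induce Sᶜ).Preconnected ∨ ∃ v : V, Sᶜ = {v}) }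

/-- Edge connectivity: smallest number of edges whose deletion leaves a
disconnected graph or a graph with no edges. -/
noncomputable def eConn {V : Type*} (G : SimpleGraph V) : ℕ :=
  sInf { k | ∃ E : Set (Sym2 V), E ⊆ G.edgeSet ∧ E.Finite ∧ E.ncard = k ∧
    (¬ (G.deleteEdges E).Preconnected ∨ G.deleteEdges E = ⊥) }

/-- Minimum degree of a graph. -/
noncomputable def minDeg {V : Type*} (G : SimpleGraph V) : ℕ :=
  sInf { k | ∃ v : V, (G.neighborSet v).ncard = k }


/-!
Let `p` be the least prime factor of `n` and `d = n / p ≥ p`. The vertex `p` is adjacent only to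
nonzero multiples of `d`, so `δ ≤ p - 1`, and `δ ≤ p - 2 = d - 2` when `n = p²`. On the other hand
every multiple of `p` is adjacent to every multiple of `d`, and a vertex `x` with `p ∤ x` is
adjacent to the at least `p` nonzero multiples of `n / gcd(x, n)`, which are multiples of `p`.
Hence deleting fewer than `δ` vertices leaves a connected graph, which still contains two of the
`d - 1` nonzero multiples of `p`; so `δ ≤ κ`, and Whitney's inequalities `κ ≤ κₑ ≤ δ` hold in
every finite graph.
-/

namespace SimpleGraph

variable {V : Type*} (G : SimpleGraph V)

lemma minDeg_le_ncard_neighborSet (v : V) : minDeg G ≤ (G.neighborSet v).ncard :=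
  Nat.sInf_le ⟨v, rfl⟩

lemma exists_ncard_neighborSet_eq_minDeg [Nonempty V] :
    ∃ v, (G.neighborSet v).ncard = minDeg G :=
  Nat.sInf_mem (s := {k | ∃ v, (G.neighborSet v).ncard = k}) ⟨_, Classical.arbitrary V, rfl⟩

lemma ncard_incidenceSet (v : V) : (G.incidenceSet v).ncard = (G.neighborSet v).ncard := by
  classical
  exact Nat.card_congr (G.incidenceSetEquivNeighborSet v)

section Finite

variable [Finite V]

lemma vConn_le_ncard {S : Set V} (hS : ¬ (G.induce Sᶜ).Preconnected ∨ ∃ v, Sᶜ = {v}) :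
    vConn G ≤ S.ncard :=
  Nat.sInf_le ⟨S, Set.toFinite S, rfl, hS⟩

lemma eConn_le_ncard {E : Set (Sym2 V)} (hE : E ⊆ G.edgeSet)
    (h : ¬ (G.deleteEdges E).Preconnected ∨ G.deleteEdges E = ⊥) : eConn G ≤ E.ncard :=
  Nat.sInf_le ⟨E, hE, Set.toFinite E, rfl, h⟩

lemma vConn_le_card_sub_one (a : V) : vConn G ≤ Nat.card V - 1 := by
  refine (G.vConn_le_ncard (S := {a}ᶜ) (Or.inr ⟨a, compl_compl _⟩)).trans_eq ?_
  rw [Set.ncard_compl, Set.ncard_singleton]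

lemma le_vConn_of_forall_ncard_lt [Nonempty V] {k : ℕ}
    (h : ∀ S : Set V, S.ncard < k → (G.induce Sᶜ).Preconnected ∧ ∀ v, Sᶜ ≠ {v}) :
    k ≤ vConn G := by
  let a := Classical.arbitrary V
  refine le_csInf ⟨_, {a}ᶜ, Set.toFinite _, rfl, Or.inr ⟨a, compl_compl _⟩⟩ ?_
  rintro _ ⟨S, -, rfl, hS⟩
  by_contra! hlt
  obtain ⟨hpre, hne⟩ := h S hlt
  rcases hS with h | ⟨v, hv⟩
  exacts [h hpre, hne v hv]

/-- Removing, for each edge of `F`, an endpoint other than `a` and `b` separates `a` from `b`. -/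
lemma vConn_le_ncard_of_not_adj_of_not_reachable (F : Set (Sym2 V)) {a b : V}
    (hab : ¬ G.Adj a b) (hF : ¬ (G.deleteEdges F).Reachable a b) : vConn G ≤ F.ncard := by
  have : Nonempty V := ⟨a⟩
  have hout : ∀ e ∈ F ∩ G.edgeSet, ∃ v ∈ e, v ≠ a ∧ v ≠ b := by
    refine Sym2.ind fun u w he => ?_
    have huw : G.Adj u w := he.2
    by_cases hu : u = a ∨ u = b
    · by_cases hw : w = a ∨ w = b
      · exfalso
        rcases hu with rfl | rfl <;> rcases hw with rfl | rfl
        exacts [G.irrefl huw, hab huw, hab huw.symm, G.irrefl huw]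
      · exact ⟨w, Sym2.mem_mk_right _ _, by tauto⟩
    · exact ⟨u, Sym2.mem_mk_left _ _, by tauto⟩
  choose! f hfe hfa hfb using hout
  set S := f '' (F ∩ G.edgeSet)
  have haS : a ∉ S := by rintro ⟨e, he, hea⟩; exact hfa e he hea
  have hbS : b ∉ S := by rintro ⟨e, he, heb⟩; exact hfb e he heb
  let φ : G.induce Sᶜ →g G.deleteEdges F :=
    { toFun := Subtype.val
      map_rel' := fun {u w} huw => by
        refine deleteEdges_adj.2 ⟨huw, fun he => ?_⟩
        have hmem : f s(u.1, w.1) ∈ S := ⟨_, ⟨he, huw⟩, rfl⟩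
        rcases Sym2.mem_iff.1 (hfe _ ⟨he, huw⟩) with h | h
        exacts [u.2 (h ▸ hmem), w.2 (h ▸ hmem)] }
  refine (G.vConn_le_ncard (S := S) (Or.inl fun hpre => ?_)).trans
    ((Set.ncard_image_le (Set.toFinite _)).trans (Set.ncard_le_ncard Set.inter_subset_left))
  exact hF ((hpre ⟨a, haS⟩ ⟨b, hbS⟩).map φ)

lemma card_sub_one_le_ncard_of_forall_mem {F : Set (Sym2 V)} {X : Set V} (hX : X.Nonempty)
    (hXc : Xᶜ.Nonempty) (hF : ∀ u ∈ X, ∀ w ∉ X, s(u, w) ∈ F) : Nat.card V - 1 ≤ F.ncard := by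
  have hprod : (X ×ˢ Xᶜ).ncard ≤ F.ncard := by
    refine Set.ncard_le_ncard_of_injOn (fun x => s(x.1, x.2))
      (fun x hx => hF _ hx.1 _ hx.2) ?_
    rintro ⟨u, w⟩ ⟨hu, hw⟩ ⟨u', w'⟩ ⟨hu', hw'⟩ h
    rcases Sym2.eq_iff.1 h with ⟨rfl, rfl⟩ | ⟨rfl, rfl⟩
    · rfl
    · exact absurd hu hw'
  have hsum := Set.ncard_add_ncard_compl X
  have h1 := (Set.ncard_pos).2 hX
  have h2 := (Set.ncard_pos).2 hXc
  rw [Set.ncard_prod] at hprod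
  have : X.ncard + Xᶜ.ncard ≤ X.ncard * Xᶜ.ncard + 1 := by nlinarith
  omega

/-- Whitney's inequality `κ ≤ |F|` for every disconnecting edge set `F`: either some pair across
the cut is non-adjacent, or all pairs across it are edges of `F`. -/
lemma vConn_le_ncard_of_not_preconnected (F : Set (Sym2 V))
    (hF : ¬ (G.deleteEdges F).Preconnected) : vConn G ≤ F.ncard := by
  obtain ⟨a, b, hab⟩ : ∃ a b, ¬ (G.deleteEdges F).Reachable a b := by
    simpa [Preconnected] using hF
  set X := {v | (G.deleteEdges F).Reachable a v}
  by_cases hcross : ∃ u ∈ X, ∃ w ∉ X, ¬ G.Adj u w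
  · obtain ⟨u, hu, w, hw, huw⟩ := hcross
    exact G.vConn_le_ncard_of_not_adj_of_not_reachable F huw fun h => hw (hu.trans h)
  · push Not at hcross
    refine (G.vConn_le_card_sub_one a).trans (card_sub_one_le_ncard_of_forall_mem (X := X)
      ⟨a, Reachable.refl a⟩ ⟨b, hab⟩ fun u hu w hw => ?_)
    by_contra he
    exact hw (hu.trans (deleteEdges_adj.2 ⟨hcross u hu w hw, he⟩).reachable)

variable [Nontrivial V]

lemma vConn_le_eConn : vConn G ≤ eConn G := by
  refine le_csInf ⟨_, G.edgeSet, subset_rfl, Set.toFinite _, rfl,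
    Or.inr (by rw [deleteEdges_edgeSet, sdiff_self])⟩ ?_
  rintro _ ⟨E, -, -, rfl, hE⟩
  refine G.vConn_le_ncard_of_not_preconnected E ?_
  rcases hE with h | h
  · exact h
  · rw [h]; exact not_preconnected_bot

lemma eConn_le_ncard_neighborSet (v : V) : eConn G ≤ (G.neighborSet v).ncard := by
  obtain ⟨w, hw⟩ := exists_ne v
  refine (G.eConn_le_ncard (G.incidenceSet_subset v) (Or.inl fun hpre => ?_)).trans_eq
    (G.ncard_incidenceSet v)
  obtain ⟨p⟩ := hpre v w
  have hadj := deleteEdges_adj.1 (p.adj_snd (Walk.not_nil_of_ne hw.symm))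
  exact hadj.2 ⟨hadj.1, Sym2.mem_mk_left _ _⟩

end Finite

end SimpleGraph

namespace zdGraph

open SimpleGraph

variable {n : ℕ} [NeZero n]

def multiplesOf (n e : ℕ) : Set (ZeroDivisors n) := {x | e ∣ (x : ZMod n).val}

lemma mem_zeroDivisors_iff {x : ZMod n} :
    x ∈ ZeroDivisors n ↔ x ≠ 0 ∧ 1 < Nat.gcd x.val n := by
  have hgcd : 0 < Nat.gcd x.val n := Nat.gcd_pos_of_pos_right _ (NeZero.pos n)
  constructor
  · rintro ⟨hx, y, hy, hxy⟩
    refine ⟨hx, lt_of_le_of_ne hgcd fun h => hy ?_⟩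
    have hunit : IsUnit x := by
      simpa using (ZMod.isUnit_iff_coprime x.val n).2 h.symm
    exact hunit.mul_right_eq_zero.1 hxy
  · rintro ⟨hx, hg⟩
    set g := Nat.gcd x.val n
    have hg_dvd : g ∣ n := Nat.gcd_dvd_right _ _
    have hlt : n / g < n := Nat.div_lt_self (NeZero.pos n) hg
    have hpos : 0 < n / g := Nat.div_pos (Nat.le_of_dvd (NeZero.pos n) hg_dvd) hgcd
    refine ⟨hx, (n / g : ℕ), fun h => ?_, ?_⟩
    · exact absurd (Nat.le_of_dvd hpos ((ZMod.natCast_eq_zero_iff _ _).1 h)) (by omega)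
    · have : n ∣ x.val * (n / g) := by
        conv_lhs => rw [← Nat.mul_div_cancel' hg_dvd]
        exact Nat.mul_dvd_mul_right (Nat.gcd_dvd_left _ _) _
      simpa using (ZMod.natCast_eq_zero_iff _ _).2 this

lemma natCast_mem_zeroDivisors {a e : ℕ} (ha : 0 < a) (han : a < n) (hea : e ∣ a)
    (hen : e ∣ n) (he : 1 < e) : (a : ZMod n) ∈ ZeroDivisors n := by
  refine mem_zeroDivisors_iff.2 ⟨fun h => ?_, ?_⟩
  · exact absurd (Nat.le_of_dvd ha ((ZMod.natCast_eq_zero_iff _ _).1 h)) (by omega)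
  · rw [ZMod.val_cast_of_lt han]
    exact he.trans_le (Nat.le_of_dvd (Nat.gcd_pos_of_pos_left _ ha) (Nat.dvd_gcd hea hen))

lemma adj_iff {u v : ZeroDivisors n} :
    (zdGraph n).Adj u v ↔ u ≠ v ∧ n ∣ (u : ZMod n).val * (v : ZMod n).val := by
  have : ((u : ZMod n).val * (v : ZMod n).val : ℕ) = (u : ZMod n) * v := by simp
  rw [← ZMod.natCast_eq_zero_iff, this]
  rfl

lemma adj_of_dvd {u v : ZeroDivisors n} (huv : u ≠ v) {a b : ℕ} (ha : a ∣ (u : ZMod n).val)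
    (hb : b ∣ (v : ZMod n).val) (hab : n ∣ a * b) : (zdGraph n).Adj u v :=
  adj_iff.2 ⟨huv, hab.trans (mul_dvd_mul ha hb)⟩

lemma ncard_multiplesOf {e : ℕ} (hen : e ∣ n) (he : 1 < e) :
    (multiplesOf n e).ncard = n / e - 1 := by
  have himage : (fun x : ZeroDivisors n => (x : ZMod n).val) '' multiplesOf n e =
      ↑({a ∈ Finset.Ioo 0 n | e ∣ a}) := by
    ext a
    simp only [Set.mem_image, Finset.coe_filter, Finset.mem_Ioo, Set.mem_ofPred_eq]
    constructor
    · rintro ⟨x, hx, rfl⟩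
      exact ⟨⟨ZMod.val_pos.2 x.2.1, ZMod.val_lt _⟩, hx⟩
    · rintro ⟨⟨ha, han⟩, hea⟩
      refine ⟨⟨a, natCast_mem_zeroDivisors ha han hea hen he⟩, ?_, ZMod.val_cast_of_lt han⟩
      simpa [multiplesOf, ZMod.val_cast_of_lt han] using hea
  have hinj : Function.Injective fun x : ZeroDivisors n => (x : ZMod n).val :=
    ZMod.val_injective n |>.comp Subtype.val_injective
  rw [← Set.ncard_image_of_injective _ hinj, himage, Set.ncard_coe_finset,
    ← Nat.Ioc_filter_dvd_card_eq_div, ← Finset.Ioo_insert_right (NeZero.pos n),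
    Finset.filter_insert, if_pos hen, Finset.card_insert_of_notMem (by simp)]
  rfl

/-- `x` is adjacent to every multiple of `n / gcd(x, n)`; when `p ∤ x`, this divisor is a multiple
of `p` with cofactor `gcd(x, n) > p`. -/
lemma minFac_le_ncard_neighborSet_inter (x : ZeroDivisors n) (hx : ¬ n.minFac ∣ (x : ZMod n).val) :
    n.minFac ≤ ((zdGraph n).neighborSet x ∩ multiplesOf n n.minFac).ncard := by
  set p := n.minFac
  set g := Nat.gcd (x : ZMod n).val n
  have hg : 1 < g := (mem_zeroDivisors_iff.1 x.2).2
  have hgx : g ∣ (x : ZMod n).val := Nat.gcd_dvd_left _ _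
  have hgn : g ∣ n := Nat.gcd_dvd_right _ _
  have hgn_lt : g < n := (Nat.le_of_dvd (ZMod.val_pos.2 x.2.1) hgx).trans_lt (ZMod.val_lt _)
  have hp : p.Prime := Nat.minFac_prime (by omega)
  have hpg : p < g := lt_of_le_of_ne (Nat.minFac_le_of_dvd hg hgn) fun h => hx (h ▸ hgx)
  have hne : g * (n / g) = n := Nat.mul_div_cancel' hgn
  have hpe : p ∣ n / g := by
    refine (hp.dvd_mul.1 (by rw [hne]; exact Nat.minFac_dvd n)).resolve_left
      fun h => hx (h.trans hgx)
  have he : 1 < n / g := by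
    by_contra! h
    interval_cases h : n / g <;> omega
  have hsub : multiplesOf n (n / g) ⊆ (zdGraph n).neighborSet x ∩ multiplesOf n p :=
    fun y hy => ⟨adj_of_dvd (fun h => hx (h ▸ hpe.trans hy)) hgx hy hne.symm.dvd, hpe.trans hy⟩
  have hcard := ncard_multiplesOf (Nat.div_dvd_of_dvd hgn) he
  rw [Nat.div_div_self hgn (NeZero.ne n)] at hcard
  have := Set.ncard_le_ncard hsub
  omega

lemma induce_compl_preconnected (S : Set (ZeroDivisors n)) (hS : S.ncard + 2 ≤ n.minFac)
    (hd : 1 < n / n.minFac) : ((zdGraph n).induce Sᶜ).Preconnected := by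
  set p := n.minFac
  have hpn : p ∣ n := Nat.minFac_dvd n
  have hnpd : n ∣ p * (n / p) := (Nat.mul_div_cancel' hpn).symm.dvd
  have hM := ncard_multiplesOf (Nat.div_dvd_of_dvd hpn) hd
  rw [Nat.div_div_self hpn (NeZero.ne n)] at hM
  obtain ⟨m, hm, hmS⟩ :=
    Set.exists_mem_notMem_of_ncard_lt_ncard (s := S) (t := multiplesOf n (n / p)) (by omega)
  have hreach_of_dvd (w : ↥Sᶜ) (hw : p ∣ (w : ZMod n).val) :
      ((zdGraph n).induce Sᶜ).Reachable w ⟨m, hmS⟩ := by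
    by_cases hwm : w.1 = m
    · obtain rfl : w = ⟨m, hmS⟩ := Subtype.ext hwm
      rfl
    · exact (show ((zdGraph n).induce Sᶜ).Adj w ⟨m, hmS⟩ from
        adj_of_dvd hwm hw hm hnpd).reachable
  have hreach (u : ↥Sᶜ) : ((zdGraph n).induce Sᶜ).Reachable u ⟨m, hmS⟩ := by
    by_cases hu : p ∣ (u : ZMod n).val
    · exact hreach_of_dvd u hu
    obtain ⟨y, ⟨huy, hy⟩, hyS⟩ := Set.exists_mem_notMem_of_ncard_lt_ncard
      (s := S) ((by omega : S.ncard < p).trans_le (minFac_le_ncard_neighborSet_inter u.1 hu))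
    exact (huy : ((zdGraph n).induce Sᶜ).Adj u ⟨y, hyS⟩).reachable.trans
      (hreach_of_dvd ⟨y, hyS⟩ hy)
  exact fun u v => (hreach u).trans (hreach v).symm

lemma compl_ne_singleton (S : Set (ZeroDivisors n)) (hS : S.ncard + 3 ≤ n / n.minFac)
    (v : ZeroDivisors n) : Sᶜ ≠ {v} := by
  intro hv
  have hn1 : n ≠ 1 := by rintro rfl; simp at hS
  have hP := ncard_multiplesOf (Nat.minFac_dvd n) (Nat.minFac_prime hn1).one_lt
  have hsub : multiplesOf n n.minFac ⊆ S ∪ {v} := by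
    rw [← hv, Set.union_compl_self]
    exact Set.subset_univ _
  have := (Set.ncard_le_ncard hsub).trans (Set.ncard_union_le S {v})
  rw [Set.ncard_singleton] at this
  omega

lemma minDeg_add_one_le_and_add_two_le (hn : ¬ n.Prime) (hn1 : n ≠ 1) :
    minDeg (zdGraph n) + 1 ≤ n.minFac ∧ minDeg (zdGraph n) + 2 ≤ n / n.minFac := by
  have hp : n.minFac.Prime := Nat.minFac_prime hn1
  have hpn : n.minFac ∣ n := Nat.minFac_dvd n
  have hpd : n.minFac ≤ n / n.minFac := Nat.minFac_le_div (NeZero.pos n) hn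
  have hpn_lt : n.minFac < n :=
    lt_of_le_of_ne (Nat.minFac_le (NeZero.pos n)) fun h => hn (h ▸ hp)
  have hM := ncard_multiplesOf (Nat.div_dvd_of_dvd hpn) (hp.one_lt.trans_le hpd)
  rw [Nat.div_div_self hpn (NeZero.ne n)] at hM
  generalize n.minFac = p at *
  generalize hd : n / p = d at *
  have hv := natCast_mem_zeroDivisors hp.pos hpn_lt dvd_rfl hpn hp.one_lt
  obtain ⟨v, hvp⟩ : ∃ v : ZeroDivisors n, (v : ZMod n).val = p :=
    ⟨⟨p, hv⟩, ZMod.val_cast_of_lt hpn_lt⟩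
  have hN : (zdGraph n).neighborSet v ⊆ multiplesOf n d \ {v} := by
    intro y hy
    obtain ⟨hne, hdvd⟩ := adj_iff.1 hy
    rw [hvp] at hdvd
    have hpd_eq : p * d = n := hd ▸ Nat.mul_div_cancel' hpn
    exact ⟨Nat.dvd_of_mul_dvd_mul_left hp.pos (hpd_eq ▸ hdvd), hne.symm⟩
  have hdeg := (minDeg_le_ncard_neighborSet _ v).trans (Set.ncard_le_ncard hN)
  have hp2 := hp.two_le
  rcases hpd.eq_or_lt with hdp | hdp
  · have hvM : v ∈ multiplesOf n d := by simp [multiplesOf, hvp, ← hdp]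
    rw [Set.ncard_sdiff_singleton_of_mem hvM, hM] at hdeg
    constructor <;> omega
  · have := Set.ncard_le_ncard (Set.sdiff_subset (s := multiplesOf n d) (t := {v}))
    constructor <;> omega

lemma nontrivial_of_three_le_div_minFac (hd : 3 ≤ n / n.minFac) :
    Nontrivial (ZeroDivisors n) := by
  have hn1 : n ≠ 1 := by rintro rfl; simp at hd
  have hP := ncard_multiplesOf (Nat.minFac_dvd n) (Nat.minFac_prime hn1).one_lt
  obtain ⟨a, b, -, -, hab⟩ :=
    (Set.one_lt_ncard_iff).1 (by omega : 1 < (multiplesOf n n.minFac).ncard)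
  exact nontrivial_of_ne a b hab

end zdGraph

/-- for composite n > 4, κ = κₑ = δ for Γ[Z_n]. -/
theorem stmt9 (n : ℕ) (hn : ¬ n.Prime) (hn4 : 4 < n) :
    vConn (zdGraph n) = eConn (zdGraph n) ∧ eConn (zdGraph n) = minDeg (zdGraph n) := by
  have : NeZero n := ⟨by omega⟩
  have hd : 3 ≤ n / n.minFac := by
    have hpd := Nat.minFac_le_div (by omega) hn
    have hnpd := Nat.mul_div_cancel' (Nat.minFac_dvd n)
    by_contra! h
    have := Nat.mul_le_mul (hpd.trans (Nat.le_of_lt_succ h)) (Nat.le_of_lt_succ h)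
    omega
  have := zdGraph.nontrivial_of_three_le_div_minFac hd
  obtain ⟨hδp, hδd⟩ := zdGraph.minDeg_add_one_le_and_add_two_le hn (by omega)
  have hκ : minDeg (zdGraph n) ≤ vConn (zdGraph n) :=
    (zdGraph n).le_vConn_of_forall_ncard_lt fun S hS =>
      ⟨zdGraph.induce_compl_preconnected S (by omega) (by omega),
        zdGraph.compl_ne_singleton S (by omega)⟩
  obtain ⟨v, hv⟩ := (zdGraph n).exists_ncard_neighborSet_eq_minDeg
  have hκe := (zdGraph n).vConn_le_eConn
  have heδ := ((zdGraph n).eConn_le_ncard_neighborSet v).trans_eq hv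
  omega
end

section
/- For a prime p and n ≥ 3, the minimum degree of the zero divisor graph Γ[Z_{p^n}] equals p - 1, and it is attained at every vertex of the form kp with p ∤ k (i.e., elements divisible by p but not p^2). -/
/-! A vertex of `Γ[ℤ/pⁿ]` is a nonzero multiple of `p`. The `p - 1` nonzero multiples of
`pⁿ⁻¹` are annihilated by every vertex, and they are exactly the neighbours of `k p` with
`p ∤ k`. A vertex that is itself a multiple of `pⁿ⁻¹` annihilates all other vertices instead,
of which there are `pⁿ⁻¹ - 2 ≥ p - 1` once `n ≥ 3`. -/

namespace ZMod

variable {m : ℕ} [NeZero m]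

theorem mul_eq_zero_of_dvd_val {d e : ℕ} (h : m ∣ d * e) {x y : ZMod m}
    (hx : d ∣ x.val) (hy : e ∣ y.val) : x * y = 0 := by
  rw [← natCast_zmod_val x, ← natCast_zmod_val y, ← Nat.cast_mul, natCast_eq_zero_iff]
  exact h.trans (mul_dvd_mul hx hy)

theorem ncard_setOf_ne_zero_dvd_val (d : ℕ) :
    {x : ZMod m | x ≠ 0 ∧ d ∣ x.val}.ncard = (m - 1) / d := by
  have himage : val '' {x : ZMod m | x ≠ 0 ∧ d ∣ x.val} =
      ↑({k ∈ Finset.range (m - 1).succ | k ≠ 0 ∧ d ∣ k}) := by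
    ext k
    simp only [Set.mem_image, Set.mem_ofPred_eq, Finset.coe_filter, Finset.mem_range,
      Nat.succ_eq_add_one, Nat.sub_add_cancel NeZero.one_le]
    constructor
    · rintro ⟨x, ⟨hx0, hdx⟩, rfl⟩
      exact ⟨val_lt x, (val_ne_zero x).mpr hx0, hdx⟩
    · rintro ⟨hkm, hk0, hdk⟩
      refine ⟨k, ⟨?_, ?_⟩, val_natCast_of_lt hkm⟩ <;> rw [← val_natCast_of_lt hkm] at hk0 hdk
      exacts [(val_ne_zero _).mp hk0, hdk]
  rw [← Set.ncard_image_of_injective _ (val_injective m), himage, Set.ncard_coe_finset,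
    Nat.card_multiples']

end ZMod

theorem ncard_neighborSet_zdGraph {m : ℕ} (u : ZeroDivisors m) :
    ((zdGraph m).neighborSet u).ncard =
      {x : ZMod m | x ≠ 0 ∧ x ≠ u ∧ (u : ZMod m) * x = 0}.ncard := by
  rw [← Set.ncard_image_of_injective _ Subtype.val_injective]
  congr 1
  ext x
  simp only [Set.mem_image, SimpleGraph.mem_neighborSet, Set.mem_ofPred_eq]
  constructor
  · rintro ⟨w, ⟨huw, huw0⟩, rfl⟩
    exact ⟨w.2.1, fun h => huw (Subtype.ext h.symm), huw0⟩
  · rintro ⟨hx0, hxu, hux⟩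
    have hx : x ∈ ZeroDivisors m := ⟨hx0, u, u.2.1, by rw [mul_comm, hux]⟩
    exact ⟨⟨x, hx⟩, ⟨fun h => hxu (congrArg Subtype.val h).symm, hux⟩, rfl⟩

theorem minDeg_eq_of_forall_le {V : Type*} {G : SimpleGraph V} {d : ℕ} {v : V}
    (hv : (G.neighborSet v).ncard = d) (hle : ∀ w, d ≤ (G.neighborSet w).ncard) :
    minDeg G = d :=
  le_antisymm (Nat.sInf_le ⟨v, hv⟩) (le_csInf ⟨d, v, hv⟩ fun _ ⟨w, hw⟩ => hw ▸ hle w)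

section PrimePower

variable {p n : ℕ} [hp : Fact p.Prime]

theorem ncard_setOf_ne_zero_pow_dvd_val {a : ℕ} (ha : a ≤ n) :
    {x : ZMod (p ^ n) | x ≠ 0 ∧ p ^ a ∣ x.val}.ncard = p ^ (n - a) - 1 := by
  rw [ZMod.ncard_setOf_ne_zero_dvd_val]
  have hsplit : p ^ n = p ^ (n - a) * p ^ a := by rw [← pow_add, Nat.sub_add_cancel ha]
  have hq : 0 < p ^ (n - a) := pow_pos hp.out.pos _
  have hd : 0 < p ^ a := pow_pos hp.out.pos _
  have hqd : p ^ a ≤ p ^ (n - a) * p ^ a := Nat.le_mul_of_pos_left _ hq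
  apply Nat.div_eq_of_lt_le
  · rw [Nat.sub_one_mul, hsplit]; omega
  · rw [Nat.sub_add_cancel hq, hsplit]; omega

theorem mem_zeroDivisors_pow_iff (hn : n ≠ 0) {x : ZMod (p ^ n)} :
    x ∈ ZeroDivisors (p ^ n) ↔ x ≠ 0 ∧ p ∣ x.val := by
  constructor
  · rintro ⟨hx0, y, hy0, hxy⟩
    refine ⟨hx0, by_contra fun hpx => hy0 ?_⟩
    have hunit : IsUnit x := by
      rw [← ZMod.natCast_zmod_val x, ZMod.isUnit_iff_coprime]
      exact (hp.out.coprime_iff_not_dvd.mpr hpx).symm.pow_right n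
    exact hunit.mul_right_eq_zero.mp hxy
  · rintro ⟨hx0, hpx⟩
    have hlt : p ^ (n - 1) < p ^ n := Nat.pow_lt_pow_right hp.out.one_lt (by omega)
    refine ⟨hx0, ((p ^ (n - 1) : ℕ) : ZMod (p ^ n)), ?_, ?_⟩
    · rw [Ne, ZMod.natCast_eq_zero_iff]
      exact Nat.not_dvd_of_pos_of_lt (pow_pos hp.out.pos _) hlt
    · refine ZMod.mul_eq_zero_of_dvd_val (d := p) (e := p ^ (n - 1)) ?_ hpx ?_
      · rw [← pow_succ', Nat.sub_add_cancel (by omega)]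
      · rw [ZMod.val_natCast_of_lt hlt]

theorem natCast_mul_prime_mul_eq_zero_iff (hn : n ≠ 0) {k : ℕ} (hk : ¬ p ∣ k)
    (x : ZMod (p ^ n)) : ((k * p : ℕ) : ZMod (p ^ n)) * x = 0 ↔ p ^ (n - 1) ∣ x.val := by
  nth_rw 1 [← ZMod.natCast_zmod_val x]
  rw [← Nat.cast_mul, ZMod.natCast_eq_zero_iff]
  generalize x.val = a
  have hpn : p ^ n = p ^ (n - 1) * p := by rw [← pow_succ, Nat.sub_add_cancel (by omega)]
  have hcop : (p ^ (n - 1)).Coprime k := (hp.out.coprime_iff_not_dvd.mpr hk).pow_left _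
  rw [hpn, show k * p * a = k * a * p by ring,
    Nat.mul_dvd_mul_iff_right hp.out.pos, hcop.dvd_mul_left]

theorem natCast_mul_prime_mul_self_ne_zero (hn : 3 ≤ n) {k : ℕ} (hk : ¬ p ∣ k) :
    ((k * p : ℕ) : ZMod (p ^ n)) * ((k * p : ℕ) : ZMod (p ^ n)) ≠ 0 := by
  rw [← Nat.cast_mul, Ne, ZMod.natCast_eq_zero_iff]
  intro h
  have h3 : p * p ^ 2 ∣ k * k * p ^ 2 := by
    rw [← pow_succ']
    exact (pow_dvd_pow p hn).trans (h.trans ⟨1, by ring⟩)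
  have hkk : p ∣ k * k := Nat.dvd_of_mul_dvd_mul_right (pow_pos hp.out.pos 2) h3
  exact hk ((hp.out.dvd_mul.mp hkk).elim id id)

theorem ncard_neighborSet_natCast_mul_prime (hn : 3 ≤ n) {k : ℕ} (hk : ¬ p ∣ k)
    (v : ZeroDivisors (p ^ n)) (hv : (v : ZMod (p ^ n)) = ((k * p : ℕ) : ZMod (p ^ n))) :
    ((zdGraph (p ^ n)).neighborSet v).ncard = p - 1 := by
  have hneighbors : {x : ZMod (p ^ n) | x ≠ 0 ∧ x ≠ v ∧ (v : ZMod (p ^ n)) * x = 0} =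
      {x | x ≠ 0 ∧ p ^ (n - 1) ∣ x.val} := by
    have hmul := natCast_mul_prime_mul_eq_zero_iff (n := n) (by omega) hk
    ext x
    simp only [Set.mem_ofPred_eq, hv, hmul]
    constructor
    · rintro ⟨hx0, -, hx⟩
      exact ⟨hx0, hx⟩
    · rintro ⟨hx0, hx⟩
      refine ⟨hx0, ?_, hx⟩
      rintro rfl
      exact natCast_mul_prime_mul_self_ne_zero hn hk ((hmul _).mpr hx)
  rw [ncard_neighborSet_zdGraph, hneighbors, ncard_setOf_ne_zero_pow_dvd_val (by omega),
    Nat.sub_sub_self (by omega), pow_one]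

theorem le_ncard_neighborSet (hn : 3 ≤ n) (u : ZeroDivisors (p ^ n)) :
    p - 1 ≤ ((zdGraph (p ^ n)).neighborSet u).ncard := by
  have hpu := ((mem_zeroDivisors_pow_iff (by omega)).mp u.2).2
  have hpn : p ^ n ∣ p * p ^ (n - 1) := by rw [← pow_succ', Nat.sub_add_cancel (by omega)]
  rw [ncard_neighborSet_zdGraph]
  by_cases hu : p ^ (n - 1) ∣ (u : ZMod (p ^ n)).val
  · have hsub : {x : ZMod (p ^ n) | x ≠ 0 ∧ p ^ 1 ∣ x.val} \ {(u : ZMod (p ^ n))} ⊆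
        {x | x ≠ 0 ∧ x ≠ u ∧ (u : ZMod (p ^ n)) * x = 0} := by
      rintro x ⟨⟨hx0, hx⟩, hxu⟩
      exact ⟨hx0, hxu, ZMod.mul_eq_zero_of_dvd_val (by rwa [pow_one, mul_comm]) hu hx⟩
    have hcard := Set.ncard_le_ncard hsub (Set.toFinite _)
    have hu_mem : (u : ZMod (p ^ n)) ∈ {x : ZMod (p ^ n) | x ≠ 0 ∧ p ^ 1 ∣ x.val} :=
      ⟨u.2.1, by rwa [pow_one]⟩
    rw [Set.ncard_sdiff_singleton_of_mem hu_mem,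
      ncard_setOf_ne_zero_pow_dvd_val (by omega)] at hcard
    have hp2 : p * p ≤ p ^ (n - 1) := by
      rw [← sq]; exact Nat.pow_le_pow_right hp.out.pos (by omega)
    have : p + 1 ≤ p * p := by nlinarith [hp.out.two_le]
    omega
  · have hsub : {x : ZMod (p ^ n) | x ≠ 0 ∧ p ^ (n - 1) ∣ x.val} ⊆
        {x | x ≠ 0 ∧ x ≠ u ∧ (u : ZMod (p ^ n)) * x = 0} := by
      rintro x ⟨hx0, hx⟩
      exact ⟨hx0, by rintro rfl; exact hu hx, ZMod.mul_eq_zero_of_dvd_val hpn hpu hx⟩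
    have hcard := Set.ncard_le_ncard hsub (Set.toFinite _)
    rwa [ncard_setOf_ne_zero_pow_dvd_val (by omega), Nat.sub_sub_self (by omega),
      pow_one] at hcard

end PrimePower

/-- for n ≥ 3, δ(Γ[Z_{pⁿ}]) = p - 1, attained at every vertex of the form
kp with p ∤ k. -/
theorem stmt10 (p n : ℕ) (hp : p.Prime) (hn : 3 ≤ n) :
    minDeg (zdGraph (p ^ n)) = p - 1 ∧
    ∀ v : ZeroDivisors (p ^ n), (∃ k : ℕ, ¬ p ∣ k ∧ (v : ZMod (p ^ n)) = ((k * p : ℕ) : ZMod (p ^ n))) →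
      ((zdGraph (p ^ n)).neighborSet v).ncard = p - 1 := by
  have := Fact.mk hp
  have hdeg : ∀ v : ZeroDivisors (p ^ n),
      (∃ k : ℕ, ¬ p ∣ k ∧ (v : ZMod (p ^ n)) = ((k * p : ℕ) : ZMod (p ^ n))) →
      ((zdGraph (p ^ n)).neighborSet v).ncard = p - 1 :=
    fun v ⟨k, hk, hv⟩ => ncard_neighborSet_natCast_mul_prime hn hk v hv
  have hp_lt : p < p ^ n := by
    simpa using Nat.pow_lt_pow_right hp.one_lt (by omega : 1 < n)
  have hp_mem : (p : ZMod (p ^ n)) ∈ ZeroDivisors (p ^ n) := by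
    rw [mem_zeroDivisors_pow_iff (by omega), ZMod.val_natCast_of_lt hp_lt, Ne,
      ZMod.natCast_eq_zero_iff]
    exact ⟨Nat.not_dvd_of_pos_of_lt hp.pos hp_lt, dvd_rfl⟩
  have hp_deg := hdeg ⟨p, hp_mem⟩ ⟨1, hp.not_dvd_one, by rw [one_mul]⟩
  exact ⟨minDeg_eq_of_forall_le hp_deg (le_ncard_neighborSet hn), hdeg⟩
end
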